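/- For l > 0 and every d ≥ 0, the Melkumyan sparse kernel satisfies 0 ≤ k_l(d) ≤ 1, i.e., the kernel is a valid weighting function taking values in [0, 1] on its entire domain. -/

import Mathlib

/-- The Melkumyan sparse kernel of Equation (10), with effective supportive
range `l`: the trigonometric formula on `d ≤ l` and `0` for `d > l`. -/
noncomputable def melkumyanKernel (l : ℝ) (d : ℝ) : ℝ :=
  if d ≤ l then
    ((2 + Real.cos (2 * Real.pi * d / l)) / 3) * (1 - d / l) +
      Real.sin (2 * Real.pi * d / l) / (2 * Real.pi)
  else 0

/-!
With `s = 2π (1 - d / l)` the kernel on `[0, l]` equals `g s / (6π)`, where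
`g s = s (2 + cos s) - 3 sin s` is `melkumyanProfile`. Its derivative `g' s = 2 - 2 cos s - s sin s`
factors through the half angle as `4 sin (s/2) (sin (s/2) - (s/2) cos (s/2))`,
which is nonnegative on `[0, 2π]` because `t cos t ≤ sin t` on `[0, π]` (from `t ≤ tan t`).
So `g` increases on `[0, 2π]` from `g 0 = 0` to `g (2π) = 6π`, and the kernel decreases
from `1` to `0` on `[0, l]`.
-/

open Real Set

namespace Real

lemma mul_cos_le_sin {x : ℝ} (h0 : 0 ≤ x) (hπ : x ≤ π) : x * cos x ≤ sin x := by
  have hsin : 0 ≤ sin x := sin_nonneg_of_nonneg_of_le_pi h0 hπ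
  rcases lt_or_ge x (π / 2) with hx | hx
  · have hcos : 0 < cos x := cos_pos_of_mem_Ioo ⟨by linarith, hx⟩
    have := le_tan h0 hx
    rwa [tan_eq_sin_div_cos, le_div_iff₀ hcos] at this
  · have hcos : cos x ≤ 0 := cos_nonpos_of_pi_div_two_le_of_le hx (by linarith)
    nlinarith

lemma mul_sin_le_two_sub_two_mul_cos {s : ℝ} (h0 : 0 ≤ s) (h2π : s ≤ 2 * π) :
    s * sin s ≤ 2 - 2 * cos s := by
  obtain ⟨t, rfl⟩ : ∃ t, s = 2 * t := ⟨s / 2, by ring⟩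
  have hsin : 0 ≤ sin t := sin_nonneg_of_nonneg_of_le_pi (by linarith) (by linarith)
  have hkey := mul_cos_le_sin (x := t) (by linarith) (by linarith)
  have hfactor : 2 - 2 * cos (2 * t) - 2 * t * sin (2 * t) = 4 * sin t * (sin t - t * cos t) := by
    rw [cos_two_mul, sin_two_mul]
    linear_combination (-4) * sin_sq_add_cos_sq t
  linarith [mul_nonneg hsin (sub_nonneg.mpr hkey)]

end Real

noncomputable def melkumyanProfile (s : ℝ) : ℝ := s * (2 + cos s) - 3 * sin s

lemma melkumyanProfile_zero : melkumyanProfile 0 = 0 := by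
  simp [melkumyanProfile]

lemma melkumyanProfile_two_pi : melkumyanProfile (2 * π) = 6 * π := by
  simp only [melkumyanProfile, cos_two_pi, sin_two_pi]
  ring

lemma hasDerivAt_melkumyanProfile (s : ℝ) :
    HasDerivAt melkumyanProfile (2 - 2 * cos s - s * sin s) s := by
  have := ((hasDerivAt_id' s).mul ((hasDerivAt_cos s).const_add 2)).sub
    ((hasDerivAt_sin s).const_mul 3)
  exact this.congr_deriv (by ring)

lemma monotoneOn_melkumyanProfile : MonotoneOn melkumyanProfile (Icc 0 (2 * π)) := by
  apply monotoneOn_of_deriv_nonneg (convex_Icc 0 (2 * π))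
  · exact HasDerivAt.continuousOn fun s _ ↦ hasDerivAt_melkumyanProfile s
  · exact fun s _ ↦ (hasDerivAt_melkumyanProfile s).differentiableAt.differentiableWithinAt
  · intro s hs
    rw [interior_Icc] at hs
    rw [(hasDerivAt_melkumyanProfile s).deriv]
    linarith [mul_sin_le_two_sub_two_mul_cos hs.1.le hs.2.le]

lemma melkumyanKernel_eq_melkumyanProfile {l d : ℝ} (hl : 0 < l) (hdl : d ≤ l) :
    melkumyanKernel l d = melkumyanProfile (2 * π * (1 - d / l)) / (6 * π) := by
  have hθ : 2 * π * d / l = 2 * π - 2 * π * (1 - d / l) := by field_simp; ring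
  rw [melkumyanKernel, if_pos hdl, melkumyanProfile, hθ, cos_two_pi_sub, sin_two_pi_sub]
  field_simp
  ring

/-- The Melkumyan sparse kernel is a valid weighting function: it takes values
in `[0, 1]` for every `d ≥ 0`. -/
theorem melkumyanKernel_mem_Icc (l : ℝ) (hl : 0 < l) (d : ℝ) (hd : 0 ≤ d) :
    0 ≤ melkumyanKernel l d ∧ melkumyanKernel l d ≤ 1 := by
  rcases le_or_gt d l with hdl | hld
  · set s := 2 * π * (1 - d / l)
    have hs : s ∈ Icc 0 (2 * π) := by
      have hx : d / l ∈ Icc 0 1 := ⟨div_nonneg hd hl.le, (div_le_one hl).mpr hdl⟩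
      constructor <;> nlinarith [hx.1, hx.2, pi_pos]
    have h6π : 0 < 6 * π := by positivity
    have hlow := monotoneOn_melkumyanProfile ⟨le_rfl, by positivity⟩ hs hs.1
    have hup := monotoneOn_melkumyanProfile hs ⟨by positivity, le_rfl⟩ hs.2
    rw [melkumyanProfile_zero] at hlow
    rw [melkumyanProfile_two_pi] at hup
    rw [melkumyanKernel_eq_melkumyanProfile hl hdl, le_div_iff₀ h6π, div_le_iff₀ h6π]
    constructor <;> linarith
  · simp [melkumyanKernel, not_le.mpr hld]
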